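/- Unused cups stay unused: let a_1 > a_2 > ... > a_n > a_{n+1} > 0. If the unique maximizer x* of F_n(x) = Σ_{i=1}^n a_i x_i/(1+x_i) over the simplex S_n satisfies x*_n = 0, then the unique maximizer y* of F_{n+1}(y) = Σ_{i=1}^{n+1} a_i y_i/(1+y_i) over the simplex S_{n+1} satisfies y*_{n+1} = 0 and y* = (x*_1, ..., x*_n, 0). -/

import Mathlib

/-!
Each term `c * t / (1 + t)` is strictly concave with derivative `c / (1 + t) ^ 2`, so a point of
the simplex is the strict maximizer as soon as it satisfies the KKT conditions: all marginals
`c i / (1 + w i) ^ 2` are bounded by a common level `μ`, with equality on the support. The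
maximizer of `Fₙ` satisfies them, by moving a little mass between two coordinates. Appending an
empty cup keeps them: the new marginal is `a (n + 1) < a n`, and `a n` is the marginal of the
unused cup `n`, which is at most `μ`.
-/

open Finset Function Filter Topology

noncomputable def cupObjective {ι : Type*} [Fintype ι] (c x : ι → ℝ) : ℝ :=
  ∑ i, c i * x i / (1 + x i)

lemma mul_div_one_add_sub_mul_div_one_add {c s t : ℝ} (hs : 1 + s ≠ 0) (ht : 1 + t ≠ 0) :
    c * t / (1 + t) - c * s / (1 + s) = c * (t - s) / ((1 + s) * (1 + t)) := by
  field_simp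
  ring

lemma mul_div_one_add_lt_tangent {c s t : ℝ} (hc : 0 < c) (hs : -1 < s) (ht : -1 < t)
    (hst : t ≠ s) : c * t / (1 + t) < c * s / (1 + s) + c / (1 + s) ^ 2 * (t - s) := by
  have hs' : 0 < 1 + s := by linarith
  have ht' : 0 < 1 + t := by linarith
  have hgap : c * s / (1 + s) + c / (1 + s) ^ 2 * (t - s) - c * t / (1 + t)
      = c * (t - s) ^ 2 / ((1 + s) ^ 2 * (1 + t)) := by
    field_simp
    ring
  have : 0 < c * (t - s) ^ 2 / ((1 + s) ^ 2 * (1 + t)) := by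
    have := sub_ne_zero.2 hst
    positivity
  linarith

lemma exists_pos_of_mem_stdSimplex {ι : Type*} [Fintype ι] {x : ι → ℝ}
    (hx : x ∈ stdSimplex ℝ ι) : ∃ i, 0 < x i := by
  by_contra! h
  have := Finset.sum_nonpos fun i (_ : i ∈ univ) => h i
  linarith [hx.2]

section Transfer

variable {ι : Type*} [Fintype ι] [DecidableEq ι]

lemma update_update_mem_stdSimplex {x : ι → ℝ} (hx : x ∈ stdSimplex ℝ ι) {i j : ι} (hij : i ≠ j)
    {ε : ℝ} (hε₀ : 0 ≤ ε) (hε : ε ≤ x i) :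
    update (update x i (x i - ε)) j (x j + ε) ∈ stdSimplex ℝ ι := by
  refine ⟨fun k => ?_, ?_⟩
  · rcases eq_or_ne k j with rfl | hkj
    · simp only [update_self]
      linarith [hx.1 k]
    rcases eq_or_ne k i with rfl | hki
    · simp only [update_of_ne hkj, update_self]
      linarith
    · simp only [update_of_ne hkj, update_of_ne hki]
      exact hx.1 k
  · have hdiff : ∑ k, (update (update x i (x i - ε)) j (x j + ε) k - x k) = 0 := by
      rw [Fintype.sum_eq_add i j hij fun k hk => by simp [update_of_ne hk.1, update_of_ne hk.2]]
      simp [update_of_ne hij, update_self]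
    rw [Finset.sum_sub_distrib, hx.2, sub_eq_zero] at hdiff
    exact hdiff

lemma cupObjective_update_update_sub {c x : ι → ℝ} (hx : ∀ k, 0 ≤ x k) {i j : ι} (hij : i ≠ j)
    {ε : ℝ} (hε₀ : 0 ≤ ε) (hε : ε ≤ x i) :
    cupObjective c (update (update x i (x i - ε)) j (x j + ε)) - cupObjective c x
      = ε * (c j / ((1 + x j) * (1 + x j + ε)) - c i / ((1 + x i) * (1 + x i - ε))) := by
  set y := update (update x i (x i - ε)) j (x j + ε)
  have hyi : y i = x i - ε := by simp [y, update_of_ne hij]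
  have hyj : y j = x j + ε := by simp [y]
  have hxi : 0 < 1 + x i := by linarith [hx i]
  have hxj : 0 < 1 + x j := by linarith [hx j]
  have hyi' : 0 < 1 + (x i - ε) := by linarith
  have hyj' : 0 < 1 + (x j + ε) := by linarith
  rw [cupObjective, cupObjective, ← Finset.sum_sub_distrib,
    Fintype.sum_eq_add i j hij fun k hk => by simp [y, update_of_ne hk.1, update_of_ne hk.2],
    hyi, hyj, mul_div_one_add_sub_mul_div_one_add hxi.ne' hyi'.ne',
    mul_div_one_add_sub_mul_div_one_add hxj.ne' hyj'.ne', ← add_sub_assoc, ← add_assoc]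
  have hyi'' : 1 + x i - ε ≠ 0 := by linarith
  field_simp
  ring

end Transfer

section Optimality

variable {ι : Type*} [Fintype ι]

lemma div_one_add_sq_le_of_isMaxOn {c x : ι → ℝ}
    (hmax : IsMaxOn (cupObjective c) (stdSimplex ℝ ι) x) (hx : x ∈ stdSimplex ℝ ι) {i : ι}
    (hi : 0 < x i) (j : ι) : c j / (1 + x j) ^ 2 ≤ c i / (1 + x i) ^ 2 := by
  classical
  rcases eq_or_ne i j with rfl | hij
  · rfl
  have hxj : 0 < 1 + x j := by linarith [hx.1 j]
  have hxi : 0 < 1 + x i := by linarith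
  have htransfer : ∀ ε ∈ Set.Ioo 0 (x i),
      c j / ((1 + x j) * (1 + x j + ε)) ≤ c i / ((1 + x i) * (1 + x i - ε)) := by
    intro ε hε
    have hle := isMaxOn_iff.1 hmax _ (update_update_mem_stdSimplex hx hij hε.1.le hε.2.le)
    rw [← sub_nonpos, cupObjective_update_update_sub hx.1 hij hε.1.le hε.2.le] at hle
    exact sub_nonpos.1 (nonpos_of_mul_nonpos_right hle hε.1)
  have hlimj : Tendsto (fun ε => c j / ((1 + x j) * (1 + x j + ε))) (𝓝[>] 0)
      (𝓝 (c j / (1 + x j) ^ 2)) := by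
    refine tendsto_nhdsWithin_of_tendsto_nhds ?_
    have : ContinuousAt (fun ε => c j / ((1 + x j) * (1 + x j + ε))) 0 := by
      fun_prop (disch := simp only [add_zero]; positivity)
    simpa [sq] using this.tendsto
  have hlimi : Tendsto (fun ε => c i / ((1 + x i) * (1 + x i - ε))) (𝓝[>] 0)
      (𝓝 (c i / (1 + x i) ^ 2)) := by
    refine tendsto_nhdsWithin_of_tendsto_nhds ?_
    have : ContinuousAt (fun ε => c i / ((1 + x i) * (1 + x i - ε))) 0 := by
      fun_prop (disch := simp only [sub_zero]; positivity)
    simpa [sq] using this.tendsto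
  exact le_of_tendsto_of_tendsto hlimj hlimi (eventually_of_mem (Ioo_mem_nhdsGT hi) htransfer)

lemma cupObjective_lt_of_kkt {c w y : ι → ℝ} (hc : ∀ i, 0 < c i) (hw : w ∈ stdSimplex ℝ ι)
    (hy : y ∈ stdSimplex ℝ ι) (hyw : y ≠ w) {μ : ℝ} (hle : ∀ i, c i / (1 + w i) ^ 2 ≤ μ)
    (hge : ∀ i, 0 < w i → μ ≤ c i / (1 + w i) ^ 2) : cupObjective c y < cupObjective c w := by
  have hw₁ : ∀ i, -1 < w i := fun i => by linarith [hw.1 i]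
  have hy₁ : ∀ i, -1 < y i := fun i => by linarith [hy.1 i]
  have htangent : ∀ i, c i * y i / (1 + y i)
      ≤ c i * w i / (1 + w i) + c i / (1 + w i) ^ 2 * (y i - w i) := fun i => by
    rcases eq_or_ne (y i) (w i) with h | h
    · simp [h]
    · exact (mul_div_one_add_lt_tangent (hc i) (hw₁ i) (hy₁ i) h).le
  obtain ⟨k, hk⟩ := Function.ne_iff.1 hyw
  have hmarginal : ∀ i, c i / (1 + w i) ^ 2 * (y i - w i) ≤ μ * (y i - w i) := fun i => by
    rcases le_or_gt (w i) (y i) with h | h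
    · exact mul_le_mul_of_nonneg_right (hle i) (sub_nonneg.2 h)
    · exact mul_le_mul_of_nonpos_right (hge i ((hy.1 i).trans_lt h)) (by linarith)
  calc cupObjective c y
      < ∑ i, (c i * w i / (1 + w i) + c i / (1 + w i) ^ 2 * (y i - w i)) :=
        Finset.sum_lt_sum (fun i _ => htangent i)
          ⟨k, mem_univ k, mul_div_one_add_lt_tangent (hc k) (hw₁ k) (hy₁ k) hk⟩
    _ ≤ ∑ i, (c i * w i / (1 + w i) + μ * (y i - w i)) :=
        Finset.sum_le_sum fun i _ => (add_le_add_iff_left _).2 (hmarginal i)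
    _ = cupObjective c w := by
        rw [Finset.sum_add_distrib, ← Finset.mul_sum, Finset.sum_sub_distrib, hy.2, hw.2,
          sub_self, mul_zero, add_zero, cupObjective]

end Optimality

lemma snoc_zero_mem_stdSimplex {n : ℕ} {x : Fin n → ℝ} (hx : x ∈ stdSimplex ℝ (Fin n)) :
    (Fin.snoc x 0 : Fin (n + 1) → ℝ) ∈ stdSimplex ℝ (Fin (n + 1)) :=
  ⟨Fin.lastCases (by simp) (by simpa using hx.1), by simp [Fin.sum_univ_castSucc, hx.2]⟩

lemma cupObjective_lt_snoc_zero {n : ℕ} {c : Fin (n + 1) → ℝ} (hc : ∀ i, 0 < c i)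
    {x : Fin n → ℝ} (hx : x ∈ stdSimplex ℝ (Fin n))
    (hmax : IsMaxOn (cupObjective (c ∘ Fin.castSucc)) (stdSimplex ℝ (Fin n)) x)
    {m : Fin n} (hm : x m = 0) (hcm : c (Fin.last n) ≤ c m.castSucc)
    {y : Fin (n + 1) → ℝ} (hy : y ∈ stdSimplex ℝ (Fin (n + 1))) (hne : y ≠ Fin.snoc x 0) :
    cupObjective c y < cupObjective c (Fin.snoc x 0) := by
  obtain ⟨i, hi⟩ := exists_pos_of_mem_stdSimplex hx
  refine cupObjective_lt_of_kkt hc (snoc_zero_mem_stdSimplex hx) hy hne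
    (μ := c i.castSucc / (1 + x i) ^ 2) (Fin.lastCases ?_ fun k => ?_) (Fin.lastCases ?_ fun k => ?_)
  · have := div_one_add_sq_le_of_isMaxOn hmax hx hi m
    simp only [comp_apply, hm, add_zero, one_pow, div_one] at this
    simpa using hcm.trans this
  · simpa using div_one_add_sq_le_of_isMaxOn hmax hx hi k
  · simp
  · simpa using fun hk => div_one_add_sq_le_of_isMaxOn hmax hx hk i

/-- unused cups stay unused: let `a 0 > a 1 > ⋯ > a n > 0` (so
`a` has `n + 1` entries; the first `n` are the original cups). If the unique
maximizer `xs` of `Fₙ` over the simplex `Sₙ` has last coordinate `0`, then the unique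
maximizer of `F_{n+1}` over `S_{n+1}` is `w = Fin.snoc xs 0 = (xs 0, …, xs (n-1), 0)`;
in particular its last coordinate is `0`. -/
theorem stmt_17 (n : ℕ) (hn : 2 ≤ n) (a : Fin (n + 1) → ℝ)
    (ha : StrictAnti a) (hpos : ∀ i, 0 < a i)
    (xs : Fin n → ℝ)
    (hmem : ∑ i, xs i = 1 ∧ ∀ i, 0 ≤ xs i)
    (hmax : ∀ y : Fin n → ℝ, (∑ i, y i = 1 ∧ ∀ i, 0 ≤ y i) →
      ∑ i, a i.castSucc * y i / (1 + y i) ≤ ∑ i, a i.castSucc * xs i / (1 + xs i))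
    (hlast : xs ⟨n - 1, by omega⟩ = 0)
    (w : Fin (n + 1) → ℝ) (hw : w = Fin.snoc xs (0 : ℝ)) :
    (w (Fin.last n) = 0) ∧
    ((∑ i, w i = 1 ∧ ∀ i, 0 ≤ w i) ∧
      (∀ y : Fin (n + 1) → ℝ, (∑ i, y i = 1 ∧ ∀ i, 0 ≤ y i) →
        ∑ i, a i * y i / (1 + y i) ≤ ∑ i, a i * w i / (1 + w i))) ∧
    (∀ z : Fin (n + 1) → ℝ, (∑ i, z i = 1 ∧ ∀ i, 0 ≤ z i) →
      (∀ y : Fin (n + 1) → ℝ, (∑ i, y i = 1 ∧ ∀ i, 0 ≤ y i) →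
        ∑ i, a i * y i / (1 + y i) ≤ ∑ i, a i * z i / (1 + z i)) →
      z = w) := by
  subst hw
  have hxs : xs ∈ stdSimplex ℝ (Fin n) := ⟨hmem.2, hmem.1⟩
  have hw := snoc_zero_mem_stdSimplex hxs
  have hlt : ∀ y ∈ stdSimplex ℝ (Fin (n + 1)), y ≠ Fin.snoc xs 0 →
      cupObjective a y < cupObjective a (Fin.snoc xs 0) := fun y hy hne =>
    cupObjective_lt_snoc_zero hpos hxs (isMaxOn_iff.2 fun y hy => hmax y ⟨hy.2, hy.1⟩) hlast
      (ha (Fin.castSucc_lt_last _)).le hy hne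
  refine ⟨Fin.snoc_last _ _, ⟨⟨hw.2, hw.1⟩, fun y hy => ?_⟩, fun z hz hzmax => ?_⟩
  · rcases eq_or_ne y (Fin.snoc xs 0) with rfl | hne
    · exact le_rfl
    · exact (hlt y ⟨hy.2, hy.1⟩ hne).le
  · by_contra hne
    exact (hzmax _ ⟨hw.2, hw.1⟩).not_gt (hlt z ⟨hz.2, hz.1⟩ hne)
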